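/- Let σθ² > 0, σv² > 0, σn² > 0, λ > 0. For an integer M ≥ 2 and T > 0 define F_M(T) = σθ²·[1 − M e^{−λT}(1 − e^{−λT})^{M−1}] + M(1 − e^{−λT})^{M−1} · ∫_T^∞ (1/σθ² + (x e^{λT}/M)/((x σv² e^{λT}/M) + σn²))^{−1} λ e^{−λx} dx. Suppose that for each M ≥ 2, T*_M > 0 is a minimizer of F_M over (0,∞). Then T*_M is asymptotically equivalent to (1/λ)ln(M) as M → ∞, i.e. λ·T*_M/ln(M) → 1. -/

import Mathlib

open MeasureTheory Filter Real Set Asymptotics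

/-!
Write `p = e^{-λT}` and `d_c(x)` for the distortion of a single received sample with gain `x`
and power `c`. The gain `σθ² - F_M(T)` equals `M (1-p)^{M-1} (σθ² p - ∫_T^∞ d_c λe^{-λx} dx)`;
since `0 ≤ d_c ≤ d_c(T)` on `(T, ∞)`, it lies between `P (σθ² - d_c(T))` and `σθ² P`, where
`P = M p (1-p)^{M-1}` is the probability that exactly one sensor transmits. At `T = ln M / λ` we
have `p = 1/M`, `c = 1` and `P ≥ e^{-1}`, so the optimal gain is at least a constant `κ > 0`.
Hence `κ / σθ² ≤ P ≤ M p e^{-Mp/2}` at the optimum, which confines `M e^{-λT*}` to a fixed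
compact subinterval of `(0, ∞)`, i.e. `λT* = ln M + O(1)`.
-/

theorem tendsto_div_nhds_one_of_abs_sub_le {ι : Type*} {l : Filter ι} {a b : ι → ℝ} {K : ℝ}
    (ha : Tendsto a l atTop) (hab : ∀ᶠ i in l, |b i - a i| ≤ K) :
    Tendsto (fun i => b i / a i) l (nhds 1) := by
  have hO : (b - a) =O[l] (fun _ => (1 : ℝ)) :=
    isBoundedUnder_of_eventually_le (a := K) hab |>.isBigO_one ℝ
  have ho : (fun _ => (1 : ℝ)) =o[l] a :=
    isLittleO_one_left_iff ℝ |>.mpr (tendsto_abs_atTop_atTop.comp ha)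
  exact (isEquivalent_iff_tendsto_one (ha.eventually_ne_atTop 0)).mp (hO.trans_isLittleO ho)

theorem integral_Ioi_mul_exp_neg_mul {lam : ℝ} (hlam : 0 < lam) (T : ℝ) :
    ∫ x in Ioi T, lam * exp (-lam * x) = exp (-lam * T) := by
  rw [integral_const_mul, integral_exp_mul_Ioi (neg_neg_of_pos hlam)]
  field_simp

theorem setIntegral_Ioi_mul_exp_neg_mul_le {g : ℝ → ℝ} {lam T b : ℝ} (hlam : 0 < lam)
    (hg : Measurable g) (hg0 : ∀ x ∈ Ioi T, 0 ≤ g x) (hgb : ∀ x ∈ Ioi T, g x ≤ b) :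
    ∫ x in Ioi T, g x * (lam * exp (-lam * x)) ≤ b * exp (-lam * T) := by
  have hdens : IntegrableOn (fun x => lam * exp (-lam * x)) (Ioi T) :=
    (exp_neg_integrableOn_Ioi T hlam).const_mul lam
  have hint : IntegrableOn (fun x => g x * (lam * exp (-lam * x))) (Ioi T) := by
    refine (hdens.const_mul b).mono' (by fun_prop) ?_
    filter_upwards [ae_restrict_mem measurableSet_Ioi] with x hx
    rw [norm_mul, Real.norm_of_nonneg (hg0 x hx), Real.norm_of_nonneg (by positivity)]
    exact mul_le_mul_of_nonneg_right (hgb x hx) (by positivity)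
  calc ∫ x in Ioi T, g x * (lam * exp (-lam * x))
      ≤ ∫ x in Ioi T, b * (lam * exp (-lam * x)) :=
        setIntegral_mono_on hint (hdens.const_mul b) measurableSet_Ioi
          fun x hx => mul_le_mul_of_nonneg_right (hgb x hx) (by positivity)
    _ = b * exp (-lam * T) := by rw [integral_const_mul, integral_Ioi_mul_exp_neg_mul hlam]

/-- The probability that exactly one of `M` sensors transmits, each independently with
probability `p`. -/
def successProb (M : ℕ) (p : ℝ) : ℝ := M * p * (1 - p) ^ (M - 1)

theorem exp_neg_one_le_one_sub_inv_pow (n : ℕ) : exp (-1) ≤ (1 - ((n : ℝ) + 1)⁻¹) ^ n := by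
  rcases n.eq_zero_or_pos with rfl | hn
  · simp
  have h : 1 - ((n : ℝ) + 1)⁻¹ = (1 + (n : ℝ)⁻¹)⁻¹ := by field_simp; ring
  rw [h, inv_pow, exp_neg]
  exact inv_anti₀ (by positivity) one_add_inv_pow_le_exp

theorem exp_neg_one_le_successProb_inv {M : ℕ} (hM : 1 ≤ M) : exp (-1) ≤ successProb M (M⁻¹) := by
  obtain ⟨n, rfl⟩ := Nat.exists_eq_add_of_le' hM
  have hn : (n + 1 : ℝ) ≠ 0 := by positivity
  simpa [successProb, hn] using exp_neg_one_le_one_sub_inv_pow n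

theorem successProb_le_mul {M : ℕ} {p : ℝ} (hp0 : 0 ≤ p) (hp1 : p ≤ 1) :
    successProb M p ≤ M * p :=
  mul_le_of_le_one_right (by positivity) (pow_le_one₀ (by linarith) (by linarith))

theorem mul_le_of_le_successProb {M : ℕ} (hM : 2 ≤ M) {p c : ℝ} (hp0 : 0 ≤ p) (hp1 : p ≤ 1)
    (hc : 0 < c) (h : c ≤ successProb M p) : M * p ≤ 8 / c := by
  set u : ℝ := M * p
  have hu : 0 ≤ u := by positivity
  have hM' : (M : ℝ) / 2 ≤ ((M - 1 : ℕ) : ℝ) := by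
    rw [Nat.cast_sub (by omega)]; linarith [(Nat.ofNat_le_cast.mpr hM : (2 : ℝ) ≤ M)]
  have hpow : (1 - p) ^ (M - 1) ≤ exp (-(u / 2)) :=
    calc (1 - p) ^ (M - 1) ≤ exp (-p) ^ (M - 1) :=
          pow_le_pow_left₀ (by linarith) (one_sub_le_exp_neg p) _
      _ = exp (-(((M - 1 : ℕ) : ℝ) * p)) := by rw [← exp_nat_mul]; ring_nf
      _ ≤ exp (-(u / 2)) := exp_le_exp.mpr (by nlinarith)
  have hsq : u ^ 2 ≤ 8 * exp (u / 2) := by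
    have := pow_div_factorial_le_exp (u / 2) (by positivity) 2
    norm_num at this
    nlinarith
  have hcu : c * u ^ 2 ≤ 8 * u := by
    have hexp : exp (-(u / 2)) * exp (u / 2) = 1 := by rw [← exp_add]; simp
    calc c * u ^ 2 ≤ u * exp (-(u / 2)) * u ^ 2 := by
          refine mul_le_mul_of_nonneg_right (h.trans ?_) (by positivity)
          exact mul_le_mul_of_nonneg_left hpow hu
      _ ≤ u * exp (-(u / 2)) * (8 * exp (u / 2)) := by gcongr
      _ = 8 * u := by rw [mul_mul_mul_comm, hexp]; ring
  have hu_pos : 0 < u := by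
    have := h.trans (successProb_le_mul hp0 hp1); linarith
  rw [le_div_iff₀ hc]
  nlinarith

theorem abs_log_mul_le_of_le_successProb {M : ℕ} (hM : 2 ≤ M) {p c : ℝ} (hp0 : 0 < p) (hp1 : p ≤ 1)
    (hc : 0 < c) (h : c ≤ successProb M p) : |log (M * p)| ≤ log (8 / c) := by
  have hMp : c ≤ M * p := h.trans (successProb_le_mul hp0.le hp1)
  have hMp' : M * p ≤ 8 / c := mul_le_of_le_successProb hM hp0.le hp1 hc h
  rw [abs_le]
  constructor
  · have hlog := log_le_log hc hMp
    have hlog8 : 0 < log 8 := log_pos (by norm_num)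
    rw [log_div (by norm_num) hc.ne']
    linarith
  · exact log_le_log (by positivity) hMp'

/-- Distortion of the estimate of the source from one received sample with channel gain `x`
under power allocation `c`. -/
noncomputable def mmse (sθ sv sn c x : ℝ) : ℝ := (1 / sθ + x * c / (x * sv * c + sn))⁻¹

section
variable {sθ sv sn c : ℝ}

theorem measurable_mmse : Measurable (mmse sθ sv sn c) := by
  unfold mmse; fun_prop

theorem mmse_nonneg (hθ : 0 ≤ sθ) (hv : 0 ≤ sv) (hn : 0 ≤ sn) (hc : 0 ≤ c) {x : ℝ} (hx : 0 ≤ x) :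
    0 ≤ mmse sθ sv sn c x := by
  unfold mmse; positivity

theorem mmse_lt (hθ : 0 < sθ) (hv : 0 ≤ sv) (hn : 0 < sn) (hc : 0 < c) {x : ℝ} (hx : 0 < x) :
    mmse sθ sv sn c x < sθ := by
  have : 0 < x * c / (x * sv * c + sn) := by positivity
  calc mmse sθ sv sn c x < (1 / sθ)⁻¹ := inv_strictAnti₀ (by positivity) (by linarith)
    _ = sθ := by simp

theorem mmse_antitoneOn (hθ : 0 < sθ) (hv : 0 ≤ sv) (hn : 0 < sn) (hc : 0 ≤ c) :
    AntitoneOn (mmse sθ sv sn c) (Ici 0) := by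
  intro x (hx : 0 ≤ x) y (hy : 0 ≤ y) hxy
  have hsnr : x * c / (x * sv * c + sn) ≤ y * c / (y * sv * c + sn) := by
    rw [div_le_div_iff₀ (by positivity) (by positivity)]
    nlinarith [mul_nonneg (mul_nonneg (sub_nonneg.mpr hxy) hc) hn.le]
  exact inv_anti₀ (by positivity) (by linarith)

end

noncomputable def alohaDistortion (sθ sv sn lam : ℝ) (M : ℕ) (T : ℝ) : ℝ :=
  sθ * (1 - successProb M (exp (-lam * T))) +
    M * (1 - exp (-lam * T)) ^ (M - 1) *
      ∫ x in Ioi T, mmse sθ sv sn (exp (lam * T) / M) x * (lam * exp (-lam * x))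

section
variable {sθ sv sn lam : ℝ} {M : ℕ} {T : ℝ}

theorem exp_neg_mul_le_one (hlam : 0 ≤ lam) (hT : 0 ≤ T) : exp (-lam * T) ≤ 1 :=
  exp_le_one_iff.mpr (by nlinarith)

theorem sub_alohaDistortion_le (hθ : 0 ≤ sθ) (hv : 0 ≤ sv) (hn : 0 ≤ sn) (hlam : 0 ≤ lam)
    (hT : 0 ≤ T) : sθ - alohaDistortion sθ sv sn lam M T ≤ sθ * successProb M (exp (-lam * T)) := by
  have hQ : 0 ≤ (1 - exp (-lam * T)) ^ (M - 1) :=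
    pow_nonneg (sub_nonneg.mpr (exp_neg_mul_le_one hlam hT)) _
  have hI : 0 ≤ ∫ x in Ioi T, mmse sθ sv sn (exp (lam * T) / M) x * (lam * exp (-lam * x)) :=
    setIntegral_nonneg measurableSet_Ioi fun x hx =>
      mul_nonneg (mmse_nonneg hθ hv hn (by positivity) (hT.trans hx.le)) (by positivity)
  have : 0 ≤ (M : ℝ) * (1 - exp (-lam * T)) ^ (M - 1) * _ :=
    mul_nonneg (mul_nonneg M.cast_nonneg hQ) hI
  unfold alohaDistortion
  linarith

theorem successProb_mul_sub_mmse_le_sub_alohaDistortion (hθ : 0 < sθ) (hv : 0 ≤ sv) (hn : 0 < sn)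
    (hlam : 0 < lam) (hT : 0 < T) :
    successProb M (exp (-lam * T)) * (sθ - mmse sθ sv sn (exp (lam * T) / M) T) ≤
      sθ - alohaDistortion sθ sv sn lam M T := by
  set c := exp (lam * T) / M
  have hc : 0 ≤ c := by positivity
  have hQ : 0 ≤ (M : ℝ) * (1 - exp (-lam * T)) ^ (M - 1) :=
    mul_nonneg (by positivity) (pow_nonneg (sub_nonneg.mpr (exp_neg_mul_le_one hlam.le hT.le)) _)
  have hI := setIntegral_Ioi_mul_exp_neg_mul_le hlam measurable_mmse
    (fun x hx => mmse_nonneg hθ.le hv hn.le hc (hT.le.trans hx.le))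
    (fun x hx => mmse_antitoneOn hθ hv hn hc (mem_Ici.mpr hT.le)
      (mem_Ici.mpr (hT.le.trans hx.le)) hx.le)
  have := mul_le_mul_of_nonneg_left hI hQ
  unfold alohaDistortion successProb at *
  linarith

theorem exp_neg_one_mul_le_sub_alohaDistortion (hθ : 0 < sθ) (hv : 0 ≤ sv) (hn : 0 < sn)
    (hlam : 0 < lam) (hM : 1 ≤ M) (hlog : lam ≤ log M) :
    exp (-1) * (sθ - mmse sθ sv sn 1 1) ≤ sθ - alohaDistortion sθ sv sn lam M (log M / lam) := by
  have hMpos : (0 : ℝ) < M := by exact_mod_cast hM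
  have hT : 1 ≤ log M / lam := by rwa [le_div_iff₀ hlam, one_mul]
  have hexp : exp (lam * (log M / lam)) = M := by
    rw [mul_div_cancel₀ _ hlam.ne', exp_log hMpos]
  have hexp_neg : exp (-lam * (log M / lam)) = (M : ℝ)⁻¹ := by
    rw [neg_mul, exp_neg, hexp]
  have key := successProb_mul_sub_mmse_le_sub_alohaDistortion (M := M) hθ hv hn hlam
    (zero_lt_one.trans_le hT)
  rw [hexp_neg, hexp, div_self hMpos.ne'] at key
  have hmmse : mmse sθ sv sn 1 (log M / lam) ≤ mmse sθ sv sn 1 1 :=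
    mmse_antitoneOn hθ hv hn zero_le_one (mem_Ici.mpr zero_le_one)
      (mem_Ici.mpr (zero_le_one.trans hT)) hT
  refine le_trans ?_ key
  exact mul_le_mul (exp_neg_one_le_successProb_inv hM) (by linarith)
    (sub_nonneg.mpr (mmse_lt hθ hv hn one_pos one_pos).le)
    ((exp_pos _).le.trans (exp_neg_one_le_successProb_inv hM))

end

/-- For the channel-aware ALOHA scheme with optimized transmission threshold
under constant (normalized) power allocation `α² = e^{λT}/M`: any minimizers
`T*_M > 0` of the expected distortion
`F_M(T) = σθ²[1 − Me^{-λT}(1-e^{-λT})^{M-1}]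
  + M(1-e^{-λT})^{M-1} ∫_T^∞ (1/σθ² + (xe^{λT}/M)/((xσv²e^{λT}/M)+σn²))⁻¹ λe^{-λx} dx`
satisfy `T*_M ~ (1/λ)ln M` as `M → ∞`, i.e. `λT*_M/ln M → 1`. -/
theorem optimal_threshold_asymptotics (sθ sv sn lam : ℝ)
    (hθ : 0 < sθ) (hv : 0 < sv) (hn : 0 < sn) (hlam : 0 < lam)
    (F : ℕ → ℝ → ℝ)
    (hF : ∀ M : ℕ, 2 ≤ M → ∀ T : ℝ, 0 < T →
      F M T = sθ * (1 - (M : ℝ) * Real.exp (-lam * T)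
          * (1 - Real.exp (-lam * T)) ^ (M - 1))
        + (M : ℝ) * (1 - Real.exp (-lam * T)) ^ (M - 1) *
          ∫ x in Set.Ioi T,
            (1 / sθ + (x * Real.exp (lam * T) / M) /
              (x * sv * Real.exp (lam * T) / M + sn))⁻¹
              * (lam * Real.exp (-lam * x)))
    (Ts : ℕ → ℝ) (hTs : ∀ M : ℕ, 2 ≤ M → 0 < Ts M)
    (hmin : ∀ M : ℕ, 2 ≤ M → ∀ T : ℝ, 0 < T → F M (Ts M) ≤ F M T) :
    Tendsto (fun M : ℕ => lam * Ts M / Real.log M) atTop (nhds 1) := by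
  have hF' : ∀ M : ℕ, 2 ≤ M → ∀ T : ℝ, 0 < T → F M T = alohaDistortion sθ sv sn lam M T := by
    intro M hM T hT
    simp only [hF M hM T hT, alohaDistortion, successProb, mmse, mul_div_assoc]
  set κ := exp (-1) * (sθ - mmse sθ sv sn 1 1)
  have hκ : 0 < κ := mul_pos (exp_pos _) (sub_pos.mpr (mmse_lt hθ hv.le hn one_pos one_pos))
  have hlog : Tendsto (fun M : ℕ => log M) atTop atTop :=
    tendsto_log_atTop.comp tendsto_natCast_atTop_atTop
  refine tendsto_div_nhds_one_of_abs_sub_le hlog (K := log (8 / (κ / sθ))) ?_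
  filter_upwards [eventually_ge_atTop 2, hlog.eventually_ge_atTop lam] with M hM hlogM
  have hMpos : (0 : ℝ) < M := by positivity
  have hT0 : 0 < log M / lam := div_pos (hlam.trans_le hlogM) hlam
  have hgap : κ / sθ ≤ successProb M (exp (-lam * Ts M)) := by
    have hopt := hmin M hM _ hT0
    rw [hF' M hM _ hT0, hF' M hM _ (hTs M hM)] at hopt
    have h0 := exp_neg_one_mul_le_sub_alohaDistortion hθ hv.le hn hlam (M := M) (by omega) hlogM
    have h1 := sub_alohaDistortion_le (M := M) hθ.le hv.le hn.le hlam.le (hTs M hM).le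
    rw [div_le_iff₀' hθ]
    linarith
  have := abs_log_mul_le_of_le_successProb hM (exp_pos _)
    (exp_neg_mul_le_one hlam.le (hTs M hM).le) (div_pos hκ hθ) hgap
  rwa [log_mul hMpos.ne' (exp_pos _).ne', log_exp, neg_mul, ← sub_eq_add_neg, abs_sub_comm] at this
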